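/- arXiv:1605.07805 — 4 statements merged into one kernel-verified Lean document; each statement's English description precedes it below -/
import Mathlib

section
/- Every minimal Moore machine admits a characteristic sample: for every minimal Moore machine M = (I,O,Q,q0,δ,λ) with nonempty input alphabet I, there exists a finite set S_IO of Moore (I,O)-traces, each consistent with M, that is a characteristic sample for M. -/
/-- A (complete, deterministic) Moore machine with input alphabet `I`,
output alphabet `O`, state set `Q`, initial state `init`, total transition
function `trans` and total output function `out`. -/
structure Moore (I O Q : Type) where
  init : Q
  trans : Q → I → Q
  out : Q → O

namespace Moore

variable {I O Q : Type}

/-- Extended transition function: `δ*(q,ε)=q` and `δ*(q,w·a)=δ(δ*(q,w),a)`. -/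
def deltaStar (M : Moore I O Q) (q : Q) (w : List I) : Q :=
  w.foldl M.trans q

/-- Extended output function: `λ*(q,w)` lists the output `λ(δ*(q,u))` for
every prefix `u` of `w` in order; this satisfies `λ*(q,ε)=λ(q)` and
`λ*(q,w·a)=λ*(q,w)·λ(δ*(q,w·a))`. -/
def lambdaStar (M : Moore I O Q) (q : Q) (w : List I) : List O :=
  w.inits.map fun u => M.out (M.deltaStar q u)

/-- Two Moore machines over the same alphabets are equivalent iff they produce
the same output word on every input word. -/
def Equivalent {Q' : Type} (M : Moore I O Q) (M' : Moore I O Q') : Prop :=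
  ∀ w : List I, M.lambdaStar M.init w = M'.lambdaStar M'.init w

/-- `M` is minimal iff every Moore machine equivalent to `M` has at least as
many states. -/
def Minimal [Fintype Q] (M : Moore I O Q) : Prop :=
  ∀ (Q' : Type) [Fintype Q'] (M' : Moore I O Q'),
    M.Equivalent M' → Fintype.card Q ≤ Fintype.card Q'

end Moore

/-- Shortlex ("length then lexicographic") strict order on words. -/
def ShortlexLt {I : Type} [LinearOrder I] (w w' : List I) : Prop :=
  w.length < w'.length ∨ (w.length = w'.length ∧ List.Lex (· < ·) w w')

/-- `w` is the shortlex-least element of the set `S` of words. -/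
def IsShortlexLeast {I : Type} [LinearOrder I] (S : Set (List I)) (w : List I) : Prop :=
  w ∈ S ∧ ∀ v ∈ S, w = v ∨ ShortlexLt w v

/-- The set of all prefixes of words in `S`. -/
def wordPrefixes {I : Type} (S : Set (List I)) : Set (List I) :=
  {u | ∃ w ∈ S, u <+: w}

namespace Moore

variable {I O Q : Type}

/-- `SP` is the shortest-prefix map of `M`: for every state `q`, `SP q` is the
shortlex-least word reaching `q` from the initial state. -/
def IsShortestPrefixMap [LinearOrder I] (M : Moore I O Q) (SP : Q → List I) : Prop :=
  ∀ q : Q, IsShortlexLeast {w | M.deltaStar M.init w = q} (SP q)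

/-- The nucleus `N_L(M)`: the empty word together with all one-letter
extensions of shortest prefixes. -/
def nucleus (_M : Moore I O Q) (SP : Q → List I) : Set (List I) :=
  {[]} ∪ {w | ∃ q : Q, ∃ a : I, w = SP q ++ [a]}

/-- `MD` is a minimum-distinguishing-suffix map of `M`: for all distinct
states `qu qv`, `MD qu qv` is the shortlex-least word on which the outputs
from `qu` and from `qv` differ. -/
def IsMinDistSuffixMap [LinearOrder I] (M : Moore I O Q) (MD : Q → Q → List I) : Prop :=
  ∀ qu qv : Q, qu ≠ qv →
    IsShortlexLeast {w | M.lambdaStar qu w ≠ M.lambdaStar qv w} (MD qu qv)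

/-- `M` is consistent with the Moore `(I,O)`-trace `t = (ρI, ρO)` iff running
`M` on `ρI` from the initial state produces `ρO`. -/
def ConsistentTrace (M : Moore I O Q) (t : List I × List O) : Prop :=
  M.lambdaStar M.init t.1 = t.2

/-- `S` is a characteristic sample for `M` (with shortest-prefix map `SP` and
minimum-distinguishing-suffix map `MD`):
(1) the nucleus is contained in the prefixes of the input words of `S`, and
(2) for all `u ∈ S_P(M)` and `v ∈ N_L(M)` reaching different states, both
`u·w` and `v·w` are prefixes of input words of `S`, where `w` is the minimum
distinguishing suffix of the two states. -/
def CharSample [LinearOrder I] (M : Moore I O Q) (SP : Q → List I)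
    (MD : Q → Q → List I) (S : Set (List I × List O)) : Prop :=
  M.nucleus SP ⊆ wordPrefixes (Prod.fst '' S) ∧
  ∀ u ∈ Set.range SP, ∀ v ∈ M.nucleus SP,
    M.deltaStar M.init u ≠ M.deltaStar M.init v →
      u ++ MD (M.deltaStar M.init u) (M.deltaStar M.init v) ∈ wordPrefixes (Prod.fst '' S) ∧
      v ++ MD (M.deltaStar M.init u) (M.deltaStar M.init v) ∈ wordPrefixes (Prod.fst '' S)

end Moore


/-- Every minimal Moore machine (with nonempty input
alphabet) admits a characteristic sample: a finite set of Moore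
`(I,O)`-traces, each consistent with `M`, that is a characteristic sample. -/
theorem exists_characteristic_sample {I O Q : Type} [LinearOrder I] [Fintype I]
    [Fintype O] [Fintype Q] [Nonempty I]
    (M : Moore I O Q) (hmin : M.Minimal)
    (SP : Q → List I) (hSP : M.IsShortestPrefixMap SP)
    (MD : Q → Q → List I) (hMD : M.IsMinDistSuffixMap MD) :
    ∃ S : Set (List I × List O), S.Finite ∧ (∀ t ∈ S, M.ConsistentTrace t) ∧
      M.CharSample SP MD S := by
  classical
  set d : List I → Q := fun w => M.deltaStar M.init w with hd
  set N : Set (List I) := M.nucleus SP with hN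
  have hNfin : N.Finite := by
    have : N = {([] : List I)} ∪ Set.range (fun p : Q × I => SP p.1 ++ [p.2]) := by
      ext w
      simp only [hN, Moore.nucleus, Set.mem_union, Set.mem_singleton_iff,
        Set.mem_setOf_eq, Set.mem_range, Prod.exists]
      constructor
      · rintro (h | ⟨q, a, h⟩)
        · exact Or.inl h
        · exact Or.inr ⟨q, a, h.symm⟩
      · rintro (h | ⟨q, a, h⟩)
        · exact Or.inl h
        · exact Or.inr ⟨q, a, h.symm⟩
    rw [this]
    exact (Set.finite_singleton _).union (Set.finite_range _)
  set F : List I × List I → List I := fun p => p.1 ++ MD (d p.1) (d p.2) with hF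
  set G : List I × List I → List I := fun p => p.2 ++ MD (d p.1) (d p.2) with hG
  set P : Set (List I × List I) := (Set.range SP) ×ˢ N with hP
  have hPfin : P.Finite := (Set.finite_range SP).prod hNfin
  set W : Set (List I) := N ∪ (F '' P) ∪ (G '' P) with hW
  have hWfin : W.Finite := ((hNfin.union (hPfin.image F)).union (hPfin.image G))
  refine ⟨(fun w => (w, M.lambdaStar M.init w)) '' W, hWfin.image _, ?_, ?_, ?_⟩
  · rintro t ⟨w, _, rfl⟩
    rfl
  · intro w hw
    exact ⟨w, ⟨(w, M.lambdaStar M.init w), ⟨w, Or.inl (Or.inl hw), rfl⟩, rfl⟩,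
      List.prefix_refl w⟩
  · intro u hu v hv hne
    constructor
    · refine ⟨F (u, v), ⟨(F (u,v), M.lambdaStar M.init (F (u,v))),
        ⟨F (u,v), Or.inl (Or.inr ⟨(u,v), ⟨hu, hv⟩, rfl⟩), rfl⟩, rfl⟩, List.prefix_refl _⟩
    · refine ⟨G (u, v), ⟨(G (u,v), M.lambdaStar M.init (G (u,v))),
        ⟨G (u,v), Or.inr ⟨(u,v), ⟨hu, hv⟩, rfl⟩, rfl⟩, rfl⟩, List.prefix_refl _⟩
end

section
/- Bound on the cardinality of a characteristic sample: every minimal Moore machine M = (I,O,Q,q0,δ,λ) with nonempty input alphabet I admits a characteristic sample S_IO with at most (|Q|·|I| + 1)·(|Q| + 1) traces. -/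
section Aux

variable {I : Type} [LinearOrder I]

lemma lex_asymm : ∀ {w v : List I}, List.Lex (· < ·) w v → List.Lex (· < ·) v w → False := by
  intro w v h1
  induction h1 with
  | nil => intro h; cases h
  | @rel a l₁ b l₂ h =>
    intro h2
    cases h2 with
    | rel h' => exact absurd h (lt_asymm h')
    | cons h' => exact lt_irrefl _ h
  | @cons a l₁ l₂ h ih =>
    intro h2
    cases h2 with
    | rel h' => exact lt_irrefl _ h'
    | cons h' => exact ih h'

lemma shortlex_asymm {w v : List I} (h1 : ShortlexLt w v) (h2 : ShortlexLt v w) : False := by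
  rcases h1 with h1 | ⟨e1, l1⟩ <;> rcases h2 with h2 | ⟨e2, l2⟩
  · omega
  · omega
  · omega
  · exact lex_asymm l1 l2

lemma shortlex_least_unique {S : Set (List I)} {w v : List I}
    (h1 : IsShortlexLeast S w) (h2 : IsShortlexLeast S v) : w = v := by
  rcases h1.2 v h2.1 with h | h
  · exact h
  · rcases h2.2 w h1.1 with h' | h'
    · exact h'.symm
    · exact absurd h (fun hh => shortlex_asymm hh h')

lemma lex_append_single {w v : List I} (hlen : w.length = v.length)
    (h : List.Lex (· < ·) w v) (a : I) : List.Lex (· < ·) (w ++ [a]) (v ++ [a]) := by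
  induction h with
  | nil => simp at hlen
  | rel h => exact List.Lex.rel h
  | cons h ih => exact List.Lex.cons (ih (by simpa using hlen))

lemma shortlex_append_single {w v : List I} (h : ShortlexLt w v) (a : I) :
    ShortlexLt (w ++ [a]) (v ++ [a]) := by
  rcases h with h | ⟨e, l⟩
  · left; simpa using h
  · right; exact ⟨by simpa using e, lex_append_single e l a⟩

end Aux
namespace Moore

variable {I O Q : Type} [LinearOrder I]

omit [LinearOrder I] in
lemma deltaStar_append_single (M : Moore I O Q) (q : Q) (w : List I) (a : I) :
    M.deltaStar q (w ++ [a]) = M.trans (M.deltaStar q w) a := by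
  simp [deltaStar, List.foldl_append]

lemma SP_spec (M : Moore I O Q) {SP : Q → List I} (hSP : M.IsShortestPrefixMap SP) (q : Q) :
    M.deltaStar M.init (SP q) = q := (hSP q).1

lemma SP_mem_nucleus (M : Moore I O Q) {SP : Q → List I}
    (hSP : M.IsShortestPrefixMap SP) (q : Q) : SP q ∈ M.nucleus SP := by
  rcases (SP q).eq_nil_or_concat' with h | ⟨w, a, h⟩
  · left; exact h
  · right
    refine ⟨M.deltaStar M.init w, a, ?_⟩
    set q' := M.deltaStar M.init w with hq'
    have hwmem : w ∈ {u | M.deltaStar M.init u = q'} := rfl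
    rcases (hSP q').2 w hwmem with heq | hlt
    · rw [h, ← heq]
    · exfalso
      have hmem : SP q' ++ [a] ∈ {u | M.deltaStar M.init u = q} := by
        have : M.deltaStar M.init (SP q' ++ [a]) = M.trans q' a :=
          by rw [deltaStar_append_single, M.SP_spec hSP]
        have h2 : M.deltaStar M.init (w ++ [a]) = M.trans q' a := by
          rw [deltaStar_append_single]
        have h3 : M.deltaStar M.init (SP q) = q := M.SP_spec hSP q
        rw [h] at h3
        simp only [Set.mem_setOf_eq, this, ← h2, h3]
      rcases (hSP q).2 _ hmem with heq | hlt2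
      · have : SP q' = w := by
          have h' : SP q' ++ [a] = w ++ [a] := heq.symm.trans h
          exact List.append_left_injective [a] h'
        exact shortlex_asymm hlt (this ▸ hlt)
      · have : ShortlexLt (SP q' ++ [a]) (SP q) := by
          rw [h]; exact shortlex_append_single hlt a
        exact shortlex_asymm this hlt2

lemma MD_symm (M : Moore I O Q) {MD : Q → Q → List I}
    (hMD : M.IsMinDistSuffixMap MD) {qu qv : Q} (h : qu ≠ qv) :
    MD qu qv = MD qv qu := by
  have h1 := hMD qu qv h
  have h2 := hMD qv qu h.symm
  have : {w | M.lambdaStar qv w ≠ M.lambdaStar qu w}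
      = {w | M.lambdaStar qu w ≠ M.lambdaStar qv w} := by
    ext w; exact ⟨Ne.symm, Ne.symm⟩
  rw [this] at h2
  exact shortlex_least_unique h1 h2

end Moore

/-- Bound on the cardinality of a characteristic sample:
every minimal Moore machine with nonempty input alphabet admits a
characteristic sample with at most `(|Q|·|I| + 1)·(|Q| + 1)` traces. -/
theorem exists_small_characteristic_sample {I O Q : Type} [LinearOrder I]
    [Fintype I] [Fintype O] [Fintype Q] [Nonempty I]
    (M : Moore I O Q) (hmin : M.Minimal)
    (SP : Q → List I) (hSP : M.IsShortestPrefixMap SP)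
    (MD : Q → Q → List I) (hMD : M.IsMinDistSuffixMap MD) :
    ∃ S : Set (List I × List O), S.Finite ∧ (∀ t ∈ S, M.ConsistentTrace t) ∧
      M.CharSample SP MD S ∧
      S.ncard ≤ (Fintype.card Q * Fintype.card I + 1) * (Fintype.card Q + 1) := by
  classical
  set b : Option (Q × I) → List I := (fun o => o.elim [] (fun p => SP p.1 ++ [p.2])) with hb
  set F : Option (Q × I) × Option Q → List I :=
    (fun p => p.2.elim (b p.1) (fun q => b p.1 ++ MD (M.deltaStar M.init (b p.1)) q)) with hF
  set g : Option (Q × I) × Option Q → List I × List O :=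
    (fun p => (F p, M.lambdaStar M.init (F p))) with hg
  have hW : ∀ w ∈ Set.range F, w ∈ wordPrefixes (Prod.fst '' Set.range g) := by
    rintro w ⟨p, hp⟩
    exact ⟨w, ⟨g p, Set.mem_range_self p, hp⟩, List.prefix_refl w⟩
  have hnuc : ∀ v ∈ M.nucleus SP, ∃ x, b x = v := by
    rintro v (hv | ⟨q, a, hv⟩)
    · exact ⟨none, hv.symm⟩
    · exact ⟨some (q, a), hv.symm⟩
  refine ⟨Set.range g, Set.finite_range g, ?_, ⟨?_, ?_⟩, ?_⟩
  · rintro t ⟨p, hp⟩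
    rw [← hp]
    rfl
  · intro v hv
    obtain ⟨x, hx⟩ := hnuc v hv
    exact hW v ⟨(x, none), hx⟩
  · rintro u ⟨qq, hqq⟩ v hv hne
    have hu_nuc : u ∈ M.nucleus SP := by
      rw [← hqq]; exact M.SP_mem_nucleus hSP qq
    obtain ⟨x, hx⟩ := hnuc u hu_nuc
    obtain ⟨y, hy⟩ := hnuc v hv
    constructor
    · apply hW
      refine ⟨(x, some (M.deltaStar M.init v)), ?_⟩
      simp only [hF, Option.elim, hx]
    · apply hW
      refine ⟨(y, some (M.deltaStar M.init u)), ?_⟩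
      simp only [hF, Option.elim, hy]
      rw [M.MD_symm hMD hne]
  · have h1 : Set.range g = ↑(Finset.univ.image g) := by
      simp
    rw [h1, Set.ncard_coe_finset]
    calc (Finset.univ.image g).card ≤ Finset.univ.card := Finset.card_image_le
      _ = (Fintype.card Q * Fintype.card I + 1) * (Fintype.card Q + 1) := by
          simp [Fintype.card_option]
end

section
/- A characteristic sample forces a lower bound on the number of states: if M = (I,O,Q,q0,δ,λ) is a minimal Moore machine and S_IO is a characteristic sample for M, then every complete Moore machine M' = (I,O,Q',q0',δ',λ') over the same alphabets I and O that is consistent with every trace in S_IO satisfies |Q'| ≥ |Q|. -/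
/-!
Send each state `q` of `M` to the state that `M'` reaches on the shortest prefix `SP q`.
If distinct `q₁, q₂` had the same image, the sample would contain `SP q₁ ++ w` and
`SP q₂ ++ w` for their minimum distinguishing suffix `w` (`SP q₂` lies in the nucleus because
shortest prefixes are prefix-closed). Consistency makes `M'` reproduce the outputs of `M` along
both words, so from one state `M'` would produce both `λ*(q₁, w)` and `λ*(q₂, w)`, which differ.
Hence the map is injective.
-/

theorem List.Lex.append_of_length_eq {α : Type} {r : α → α → Prop} {u v : List α}
    (h : List.Lex r u v) (hlen : u.length = v.length) (x y : List α) :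
    List.Lex r (u ++ x) (v ++ y) := by
  induction h with
  | nil => simp at hlen
  | cons _ ih => exact .cons (ih (by simpa using hlen))
  | rel hab => exact .rel hab

section Shortlex

variable {I : Type} [LinearOrder I] {u v : List I}

theorem ShortlexLt.asymm (h : ShortlexLt u v) : ¬ ShortlexLt v u := by
  rintro (h' | ⟨hlen', h'⟩) <;> rcases h with h | ⟨hlen, h⟩
  · omega
  · omega
  · omega
  · exact _root_.asymm h h'

theorem ShortlexLt.append_right (h : ShortlexLt u v) (x : List I) :
    ShortlexLt (u ++ x) (v ++ x) := by
  rcases h with h | ⟨hlen, h⟩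
  · exact .inl (by simpa using h)
  · exact .inr ⟨by simp [hlen], h.append_of_length_eq hlen x x⟩

theorem IsShortlexLeast.not_shortlexLt {S : Set (List I)} (h : IsShortlexLeast S u)
    (hv : v ∈ S) : ¬ ShortlexLt v u := by
  rcases h.2 v hv with rfl | h'
  · exact fun h'' => h''.asymm h''
  · exact h'.asymm

end Shortlex

namespace Moore

variable {I O Q Q' : Type}

theorem deltaStar_append (M : Moore I O Q) (q : Q) (u v : List I) :
    M.deltaStar q (u ++ v) = M.deltaStar (M.deltaStar q u) v :=
  List.foldl_append

theorem lambdaStar_cons (M : Moore I O Q) (q : Q) (a : I) (w : List I) :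
    M.lambdaStar q (a :: w) = M.out q :: M.lambdaStar (M.trans q a) w := by
  simp [lambdaStar, deltaStar, Function.comp_def]

@[simp]
theorem length_lambdaStar (M : Moore I O Q) (q : Q) (w : List I) :
    (M.lambdaStar q w).length = w.length + 1 := by
  simp [lambdaStar]

theorem lambdaStar_prefix_lambdaStar (M : Moore I O Q) (q : Q) {u x : List I}
    (h : u <+: x) : M.lambdaStar q u <+: M.lambdaStar q x := by
  obtain ⟨v, rfl⟩ := h
  simp only [lambdaStar, List.inits_append, List.map_append]
  exact List.prefix_append _ _

theorem drop_lambdaStar_append (M : Moore I O Q) (q : Q) (u w : List I) :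
    (M.lambdaStar q (u ++ w)).drop u.length = M.lambdaStar (M.deltaStar q u) w := by
  induction u generalizing q with
  | nil => rfl
  | cons a u ih =>
    rw [List.cons_append, lambdaStar_cons, List.length_cons, List.drop_succ_cons]
    exact ih (M.trans q a)

theorem lambdaStar_eq_of_prefix {M : Moore I O Q} {M' : Moore I O Q'} {u x : List I}
    (h : u <+: x) (hx : M.lambdaStar M.init x = M'.lambdaStar M'.init x) :
    M.lambdaStar M.init u = M'.lambdaStar M'.init u := by
  have hu := M.lambdaStar_prefix_lambdaStar M.init h
  have hu' := M'.lambdaStar_prefix_lambdaStar M'.init h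
  rw [hx] at hu
  exact (List.prefix_of_prefix_length_le hu hu' (by simp)).eq_of_length (by simp)

theorem lambdaStar_eq_of_mem_wordPrefixes {M : Moore I O Q} {M' : Moore I O Q'}
    {S : Set (List I × List O)} (hcons : ∀ t ∈ S, M.ConsistentTrace t)
    (hcons' : ∀ t ∈ S, M'.ConsistentTrace t) {u : List I}
    (hu : u ∈ wordPrefixes (Prod.fst '' S)) :
    M.lambdaStar M.init u = M'.lambdaStar M'.init u := by
  obtain ⟨_, ⟨t, ht, rfl⟩, hut⟩ := hu
  exact lambdaStar_eq_of_prefix hut ((hcons t ht).trans (hcons' t ht).symm)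

theorem lambdaStar_deltaStar_eq_of_mem_wordPrefixes {M : Moore I O Q} {M' : Moore I O Q'}
    {S : Set (List I × List O)} (hcons : ∀ t ∈ S, M.ConsistentTrace t)
    (hcons' : ∀ t ∈ S, M'.ConsistentTrace t) {u w : List I}
    (huw : u ++ w ∈ wordPrefixes (Prod.fst '' S)) :
    M.lambdaStar (M.deltaStar M.init u) w = M'.lambdaStar (M'.deltaStar M'.init u) w := by
  rw [← drop_lambdaStar_append, ← drop_lambdaStar_append,
    lambdaStar_eq_of_mem_wordPrefixes hcons hcons' huw]

namespace IsShortestPrefixMap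

variable [LinearOrder I] {M : Moore I O Q} {SP : Q → List I}

theorem deltaStar_eq (hSP : M.IsShortestPrefixMap SP) (q : Q) :
    M.deltaStar M.init (SP q) = q :=
  (hSP q).1

theorem eq_of_eq_append_singleton (hSP : M.IsShortestPrefixMap SP) {q : Q} {w : List I}
    {a : I} (hq : SP q = w ++ [a]) : SP (M.deltaStar M.init w) = w := by
  rcases (hSP _).2 w rfl with h | h
  · exact h
  · have hreach : M.deltaStar M.init (SP (M.deltaStar M.init w) ++ [a]) = q := by
      rw [deltaStar_append, hSP.deltaStar_eq, ← deltaStar_append, ← hq, hSP.deltaStar_eq]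
    have hmin := (hSP q).not_shortlexLt hreach
    rw [hq] at hmin
    exact absurd (h.append_right [a]) hmin

theorem mem_nucleus (hSP : M.IsShortestPrefixMap SP) (q : Q) : SP q ∈ M.nucleus SP := by
  rcases List.eq_nil_or_concat (SP q) with h | ⟨w, a, h⟩
  · exact .inl h
  · rw [List.concat_eq_append] at h
    exact .inr ⟨M.deltaStar M.init w, a, by rw [h, hSP.eq_of_eq_append_singleton h]⟩

end IsShortestPrefixMap

theorem CharSample.injective_deltaStar_comp [LinearOrder I] {M : Moore I O Q}
    {SP : Q → List I} {MD : Q → Q → List I} {S : Set (List I × List O)}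
    (hSP : M.IsShortestPrefixMap SP) (hMD : M.IsMinDistSuffixMap MD)
    (hCS : M.CharSample SP MD S) (hcons : ∀ t ∈ S, M.ConsistentTrace t)
    {M' : Moore I O Q'} (hcons' : ∀ t ∈ S, M'.ConsistentTrace t) :
    Function.Injective fun q => M'.deltaStar M'.init (SP q) := by
  intro q₁ q₂ hq
  by_contra hne
  have hreach := hSP.deltaStar_eq
  obtain ⟨h₁, h₂⟩ := hCS.2 (SP q₁) ⟨q₁, rfl⟩ (SP q₂) (hSP.mem_nucleus q₂)
    (by rwa [hreach, hreach])
  rw [hreach, hreach] at h₁ h₂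
  apply (hMD q₁ q₂ hne).1
  calc M.lambdaStar q₁ (MD q₁ q₂)
      = M'.lambdaStar (M'.deltaStar M'.init (SP q₁)) (MD q₁ q₂) := by
        rw [← lambdaStar_deltaStar_eq_of_mem_wordPrefixes hcons hcons' h₁, hreach]
    _ = M'.lambdaStar (M'.deltaStar M'.init (SP q₂)) (MD q₁ q₂) := by
        rw [show M'.deltaStar M'.init (SP q₁) = M'.deltaStar M'.init (SP q₂) from hq]
    _ = M.lambdaStar q₂ (MD q₁ q₂) := by
        rw [← lambdaStar_deltaStar_eq_of_mem_wordPrefixes hcons hcons' h₂, hreach]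

end Moore

theorem charSample_state_lower_bound_general {I O Q Q' : Type} [LinearOrder I]
    [Fintype Q] [Fintype Q']
    (M : Moore I O Q)
    (SP : Q → List I) (hSP : M.IsShortestPrefixMap SP)
    (MD : Q → Q → List I) (hMD : M.IsMinDistSuffixMap MD)
    (S : Set (List I × List O))
    (hcons : ∀ t ∈ S, M.ConsistentTrace t)
    (hCS : M.CharSample SP MD S)
    (M' : Moore I O Q') (hcons' : ∀ t ∈ S, M'.ConsistentTrace t) :
    Fintype.card Q ≤ Fintype.card Q' :=
  Fintype.card_le_of_injective _ (hCS.injective_deltaStar_comp hSP hMD hcons hcons')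

/-- A characteristic sample forces a lower bound on the
number of states: every complete Moore machine consistent with a
characteristic sample of a minimal machine `M` has at least as many states
as `M`. -/
theorem charSample_state_lower_bound {I O Q Q' : Type} [LinearOrder I]
    [Fintype I] [Fintype O] [Fintype Q] [Fintype Q']
    (M : Moore I O Q) (hmin : M.Minimal)
    (SP : Q → List I) (hSP : M.IsShortestPrefixMap SP)
    (MD : Q → Q → List I) (hMD : M.IsMinDistSuffixMap MD)
    (S : Set (List I × List O)) (hfin : S.Finite)
    (hcons : ∀ t ∈ S, M.ConsistentTrace t)
    (hCS : M.CharSample SP MD S)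
    (M' : Moore I O Q') (hcons' : ∀ t ∈ S, M'.ConsistentTrace t) :
    Fintype.card Q ≤ Fintype.card Q' :=
  charSample_state_lower_bound_general M SP hSP MD hMD S hcons hCS M' hcons'
end

section
/- Eventual appearance of a characteristic sample in a covering sequence of traces (abstract core of identification in the limit): let M = (I,O,Q,q0,δ,λ) be a minimal Moore machine with nonempty input alphabet I, and let (ρI^1,ρO^1), (ρI^2,ρO^2), … be an infinite sequence of Moore (I,O)-traces, each consistent with M, such that every word ρ ∈ I* occurs as the input word ρI^i of some trace in the sequence. Then there exists an index k such that for all n ≥ k, the set {(ρI^1,ρO^1), …, (ρI^n,ρO^n)} is a characteristic sample for M. -/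
/-- Eventual appearance of a characteristic sample in a
covering sequence of traces: if an infinite sequence of traces of a minimal
Moore machine `M` covers every input word, then some finite prefix of the
sequence (and every longer prefix) forms a characteristic sample for `M`. -/
theorem eventually_characteristic_sample {I O Q : Type} [LinearOrder I]
    [Fintype I] [Fintype O] [Fintype Q] [Nonempty I]
    (M : Moore I O Q) (hmin : M.Minimal)
    (SP : Q → List I) (hSP : M.IsShortestPrefixMap SP)
    (MD : Q → Q → List I) (hMD : M.IsMinDistSuffixMap MD)
    (t : ℕ → List I × List O)
    (hcons : ∀ i : ℕ, M.ConsistentTrace (t i))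
    (hcover : ∀ ρ : List I, ∃ i : ℕ, (t i).1 = ρ) :
    ∃ k : ℕ, ∀ n ≥ k, M.CharSample SP MD {p | ∃ i ≤ n, t i = p} := by
  classical
  -- choose an occurrence index for every word
  choose g hg using hcover
  -- parametrize the nucleus
  let nword : Option (Q × I) → List I := fun o =>
    match o with
    | none => []
    | some (q, a) => SP q ++ [a]
  have hnuc : ∀ v ∈ M.nucleus SP, ∃ o, v = nword o := by
    intro v hv
    rcases hv with hv | ⟨q, a, rfl⟩
    · exact ⟨none, hv⟩
    · exact ⟨some (q, a), rfl⟩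
  let F1 : Q × Option (Q × I) → List I := fun p =>
    SP p.1 ++ MD (M.deltaStar M.init (SP p.1)) (M.deltaStar M.init (nword p.2))
  let F2 : Q × Option (Q × I) → List I := fun p =>
    nword p.2 ++ MD (M.deltaStar M.init (SP p.1)) (M.deltaStar M.init (nword p.2))
  let k := (Finset.univ.sup fun o : Option (Q × I) => g (nword o)) ⊔
    (Finset.univ.sup fun p : Q × Option (Q × I) => g (F1 p)) ⊔
    (Finset.univ.sup fun p : Q × Option (Q × I) => g (F2 p))
  refine ⟨k, fun n hn => ?_⟩
  have key : ∀ w : List I, g w ≤ n →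
      w ∈ wordPrefixes (Prod.fst '' {p | ∃ i ≤ n, t i = p}) := by
    intro w hw
    exact ⟨w, ⟨t (g w), ⟨g w, hw, rfl⟩, hg w⟩, List.prefix_refl w⟩
  constructor
  · intro v hv
    obtain ⟨o, rfl⟩ := hnuc v hv
    refine key _ (le_trans ?_ hn)
    calc g (nword o) ≤ Finset.univ.sup fun o : Option (Q × I) => g (nword o) :=
          Finset.le_sup (f := fun o : Option (Q × I) => g (nword o)) (Finset.mem_univ o)
      _ ≤ k := le_sup_of_le_left le_sup_left
  · rintro u ⟨q, rfl⟩ v hv hne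
    obtain ⟨o, rfl⟩ := hnuc v hv
    constructor
    · refine key (F1 (q, o)) (le_trans ?_ hn)
      calc g (F1 (q, o)) ≤ Finset.univ.sup fun p : Q × Option (Q × I) => g (F1 p) :=
            Finset.le_sup (f := fun p => g (F1 p)) (Finset.mem_univ (q, o))
        _ ≤ k := le_sup_of_le_left le_sup_right
    · refine key (F2 (q, o)) (le_trans ?_ hn)
      calc g (F2 (q, o)) ≤ Finset.univ.sup fun p : Q × Option (Q × I) => g (F2 p) :=
            Finset.le_sup (f := fun p => g (F2 p)) (Finset.mem_univ (q, o))
        _ ≤ k := le_sup_right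
end
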